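/- Let q and b be complex numbers with 0 < |q| < 1, |b| < 1 and |q| < |b|². Then Σ_{n=0}^∞ b^{2n} · [(q/b²;q)_n² (b²;q)_∞ / ((q;q)_n² (q/b²;q)_∞)] · ₁ψ₁(q^{1+n}/b²; q^{1+n}; q, b) = [(b²;q)_∞/(q/b²;q)_∞] · [(q/b;q)_∞/(b;q)_∞]². (This is the evaluation, via Ramanujan's ₁ψ₁ summation and the q-binomial theorem, of the bilateral double sum obtained from the N_f = 1 superconformal index after interchanging the two summations, with a = b².) -/

import Mathlib

open scoped BigOperators

/-- The infinite q-Pochhammer symbol `(z;q)_∞ = ∏_{j=0}^∞ (1 - z q^j)`. -/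
noncomputable def qPochInf (z q : ℂ) : ℂ := ∏' j : ℕ, (1 - z * q ^ j)

/-- The q-Pochhammer symbol `(z;q)_n = (z;q)_∞ / (z q^n;q)_∞` for `n : ℤ`.
Note that if a denominator factor of a bilateral summand vanishes, this
convention yields `0`, in accordance with the stated interpretation. -/
noncomputable def qPochInt (z q : ℂ) (n : ℤ) : ℂ :=
  qPochInf z q / qPochInf (z * q ^ n) q

/-- The bilateral basic hypergeometric series `₁ψ₁(A;B;q,Z)`. -/
noncomputable def psi11 (A B q Z : ℂ) : ℂ :=
  ∑' m : ℤ, qPochInt A q m / qPochInt B q m * Z ^ m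

/-!
The `n`-th bilateral series truncates: `(q^{1+n};q)_m` vanishes for `m < -n`, so after the shift
`m ↦ m - n` it is the unilateral series `₁φ₀(a;—;q,b)`, `a = q/b²`, divided by its own `n`-th term
`(a;q)_n bⁿ/(q;q)_n`. Each summand of the double sum is therefore a constant multiple of that
`n`-th term, and the double sum is the constant times `₁φ₀(a;—;q,b)²`, which the q-binomial theorem
`₁φ₀(a;—;q,b) = (ab;q)_∞/(b;q)_∞` evaluates. The q-binomial theorem itself follows by iterating
the functional equation `(1 - w) ₁φ₀(w) = (1 - aw) ₁φ₀(qw)` and letting `qᴺw → 0`.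
-/

open Filter Topology Finset

noncomputable def qPoch (z q : ℂ) (n : ℕ) : ℂ := ∏ j ∈ range n, (1 - z * q ^ j)

lemma qPoch_succ (z q : ℂ) (n : ℕ) : qPoch z q (n + 1) = qPoch z q n * (1 - z * q ^ n) :=
  prod_range_succ _ n

section QPochhammer

variable {q : ℂ}

lemma mul_pow_ne_one {z : ℂ} (hq : ‖q‖ ≤ 1) (hz : ‖z‖ < 1) (j : ℕ) : z * q ^ j ≠ 1 := by
  intro h
  have : ‖z * q ^ j‖ < 1 := by
    rw [norm_mul, norm_pow]
    exact (mul_le_of_le_one_right (norm_nonneg z) (pow_le_one₀ (norm_nonneg q) hq)).trans_lt hz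
  simp [h] at this

lemma norm_pow_mul_le (hq : ‖q‖ ≤ 1) (n : ℕ) (w : ℂ) : ‖q ^ n * w‖ ≤ ‖w‖ := by
  rw [norm_mul, norm_pow]
  exact mul_le_of_le_one_left (norm_nonneg w) (pow_le_one₀ (norm_nonneg q) hq)

lemma summable_norm_mul_pow (z : ℂ) (hq : ‖q‖ < 1) : Summable fun j : ℕ => ‖z * q ^ j‖ := by
  simpa [norm_mul, norm_pow] using (summable_geometric_of_lt_one (norm_nonneg q) hq).mul_left ‖z‖

lemma multipliable_qPochInf (z : ℂ) (hq : ‖q‖ < 1) : Multipliable fun j : ℕ => 1 - z * q ^ j := by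
  simpa [sub_eq_add_neg] using
    multipliable_one_add_of_summable (f := fun j : ℕ => -(z * q ^ j))
      (by simpa using summable_norm_mul_pow z hq)

lemma qPochInf_ne_zero {z : ℂ} (hq : ‖q‖ < 1) (hz : ∀ j : ℕ, z * q ^ j ≠ 1) :
    qPochInf z q ≠ 0 := by
  simpa [qPochInf, sub_eq_add_neg] using
    tprod_one_add_ne_zero_of_summable (f := fun j : ℕ => -(z * q ^ j))
      (fun j => by rw [← sub_eq_add_neg, sub_ne_zero]; exact (hz j).symm)
      (by simpa using summable_norm_mul_pow z hq)

lemma qPochInf_eq_zero {z : ℂ} {j : ℕ} (hz : z * q ^ j = 1) : qPochInf z q = 0 :=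
  tprod_of_exists_eq_zero ⟨j, by rw [hz, sub_self]⟩

lemma tendsto_qPoch (z : ℂ) (hq : ‖q‖ < 1) :
    Tendsto (qPoch z q) atTop (𝓝 (qPochInf z q)) :=
  (multipliable_qPochInf z hq).hasProd.tendsto_prod_nat

lemma qPoch_mul_qPochInf (z : ℂ) (hq : ‖q‖ < 1) (n : ℕ) :
    qPoch z q n * qPochInf (z * q ^ n) q = qPochInf z q := by
  have h : Multipliable fun j : ℕ => 1 - z * q ^ (j + n) := by
    convert multipliable_qPochInf (z * q ^ n) hq using 3; ring
  have key := h.prod_mul_tprod_nat_mul' (f := fun j : ℕ => 1 - z * q ^ j)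
  unfold qPoch qPochInf
  convert key using 3
  funext j
  ring

lemma qPochInt_natCast {z : ℂ} (hq : ‖q‖ < 1) (hz : qPochInf z q ≠ 0) (n : ℕ) :
    qPochInt z q n = qPoch z q n := by
  have h := qPoch_mul_qPochInf z hq n
  rw [qPochInt, zpow_natCast, ← h, mul_div_assoc, div_self (right_ne_zero_of_mul (h ▸ hz)),
    mul_one]

lemma qPochInt_natCast_ne_zero {z : ℂ} (hq : ‖q‖ < 1) (hz : qPochInf z q ≠ 0) (n : ℕ) :
    qPochInt z q n ≠ 0 := by
  rw [qPochInt_natCast hq hz]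
  exact left_ne_zero_of_mul ((qPoch_mul_qPochInf z hq n).symm ▸ hz)

lemma qPochInt_mul_zpow {z : ℂ} (hq0 : q ≠ 0) (hz : qPochInf z q ≠ 0) (n m : ℤ) :
    qPochInt (z * q ^ n) q m = qPochInt z q (n + m) / qPochInt z q n := by
  rw [qPochInt, qPochInt, qPochInt, div_div_div_cancel_left' _ _ hz, mul_assoc, ← zpow_add₀ hq0]

lemma qPochInt_self_of_neg (hq0 : q ≠ 0) {m : ℤ} (hm : m < 0) : qPochInt q q m = 0 := by
  have h : q * q ^ m * q ^ (-(m + 1)).toNat = 1 := by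
    rw [← zpow_natCast, Int.toNat_of_nonneg (by omega), mul_assoc, ← zpow_add₀ hq0,
      show m + -(m + 1) = -1 by ring, zpow_neg_one, mul_inv_cancel₀ hq0]
  rw [qPochInt, qPochInf_eq_zero h, div_zero]

end QPochhammer

/-- The unilateral series `₁φ₀(a;—;q,w)`. -/
noncomputable def phi10 (a q w : ℂ) : ℂ := ∑' k : ℕ, qPoch a q k / qPoch q q k * w ^ k

lemma qPoch_div_qPoch_succ (a q : ℂ) (k : ℕ) :
    qPoch a q (k + 1) / qPoch q q (k + 1)
      = qPoch a q k / qPoch q q k * ((1 - a * q ^ k) / (1 - q * q ^ k)) := by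
  rw [qPoch_succ, qPoch_succ, mul_div_mul_comm]

section QBinomial

variable {q w : ℂ}

lemma summable_norm_phi10 (a : ℂ) (hq : ‖q‖ < 1) (hw : ‖w‖ < 1) :
    Summable fun k : ℕ => ‖qPoch a q k / qPoch q q k * w ^ k‖ := by
  have hfac (c : ℂ) : Tendsto (fun k : ℕ => ‖1 - c * q ^ k‖) atTop (𝓝 1) := by
    simpa using (((tendsto_pow_atTop_nhds_zero_of_norm_lt_one hq).const_mul c).const_sub 1).norm
  have hratio :
      Tendsto (fun k : ℕ => ‖w‖ * (‖1 - a * q ^ k‖ / ‖1 - q * q ^ k‖)) atTop (𝓝 ‖w‖) := by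
    simpa using ((hfac a).div (hfac q) one_ne_zero).const_mul ‖w‖
  refine summable_of_ratio_norm_eventually_le (r := (1 + ‖w‖) / 2) (by linarith) ?_
  filter_upwards [hratio.eventually (gt_mem_nhds (show ‖w‖ < (1 + ‖w‖) / 2 by linarith))] with k hk
  rw [norm_norm, norm_norm]
  calc ‖qPoch a q (k + 1) / qPoch q q (k + 1) * w ^ (k + 1)‖
      = ‖w‖ * (‖1 - a * q ^ k‖ / ‖1 - q * q ^ k‖) * ‖qPoch a q k / qPoch q q k * w ^ k‖ := by
        rw [qPoch_div_qPoch_succ]; simp only [norm_mul, norm_div, norm_pow, pow_succ]; ring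
    _ ≤ (1 + ‖w‖) / 2 * ‖qPoch a q k / qPoch q q k * w ^ k‖ := by gcongr

lemma one_sub_mul_phi10 {a : ℂ} (hq : ‖q‖ < 1) (hw : ‖w‖ < 1) :
    (1 - w) * phi10 a q w = (1 - a * w) * phi10 a q (q * w) := by
  set c : ℕ → ℂ := fun k => qPoch a q k / qPoch q q k
  have hqw : ‖q * w‖ < 1 := by simpa using (norm_pow_mul_le hq.le 1 w).trans_lt hw
  have hs := (summable_norm_phi10 a hq hw).of_norm
  have hs' := (summable_norm_phi10 a hq hqw).of_norm
  have hrec (k : ℕ) : c (k + 1) * (1 - q * q ^ k) = c k * (1 - a * q ^ k) := by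
    simp only [c]
    rw [qPoch_div_qPoch_succ, mul_assoc,
      div_mul_cancel₀ _ (sub_ne_zero.mpr (mul_pow_ne_one hq.le hq k).symm)]
  have hdiff : phi10 a q w - phi10 a q (q * w) = w * (phi10 a q w - a * phi10 a q (q * w)) :=
    calc phi10 a q w - phi10 a q (q * w) = ∑' k, (c k * w ^ k - c k * (q * w) ^ k) :=
          (hs.tsum_sub hs').symm
      _ = ∑' k, (c (k + 1) * w ^ (k + 1) - c (k + 1) * (q * w) ^ (k + 1)) := by
          rw [(hs.sub hs').tsum_eq_zero_add]; simp [c]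
      _ = ∑' k, w * (c k * w ^ k - a * (c k * (q * w) ^ k)) := by
          congr 1; ext k; linear_combination w ^ (k + 1) * hrec k
      _ = w * (phi10 a q w - a * phi10 a q (q * w)) := by
          rw [tsum_mul_left, hs.tsum_sub (hs'.mul_left a), tsum_mul_left]; rfl
  linear_combination hdiff

lemma tendsto_phi10_pow_mul (a : ℂ) (hq : ‖q‖ < 1) (hw : ‖w‖ < 1) :
    Tendsto (fun N : ℕ => phi10 a q (q ^ N * w)) atTop (𝓝 1) := by
  have hlim := tendsto_tsum_of_dominated_convergence (summable_norm_phi10 a hq hw)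
    (f := fun N k => qPoch a q k / qPoch q q k * (q ^ N * w) ^ k)
    (fun k => (((tendsto_pow_atTop_nhds_zero_of_norm_lt_one hq).mul_const w).pow k).const_mul _)
    (Eventually.of_forall fun N k => by
      rw [norm_mul, norm_mul, norm_pow, norm_pow]
      gcongr
      exact norm_pow_mul_le hq.le N w)
  rw [tsum_eq_single 0 fun k hk => by simp [hk]] at hlim
  simpa [qPoch, phi10] using hlim

theorem phi10_eq_qPochInf_div {a : ℂ} (hq : ‖q‖ < 1) (hw : ‖w‖ < 1) :
    phi10 a q w = qPochInf (a * w) q / qPochInf w q := by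
  have hiter (N : ℕ) :
      phi10 a q w * qPoch w q N = qPoch (a * w) q N * phi10 a q (q ^ N * w) := by
    induction N with
    | zero => simp [qPoch]
    | succ N ih =>
      have hfe := one_sub_mul_phi10 (a := a) hq ((norm_pow_mul_le hq.le N w).trans_lt hw)
      rw [show q * (q ^ N * w) = q ^ (N + 1) * w by ring] at hfe
      rw [qPoch_succ, qPoch_succ]
      linear_combination qPoch (a * w) q N * hfe + (1 - w * q ^ N) * ih
  have hlim := tendsto_nhds_unique (((tendsto_qPoch w hq).const_mul (phi10 a q w)).congr hiter)
    (by simpa using (tendsto_qPoch (a * w) hq).mul (tendsto_phi10_pow_mul a hq hw))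
  rw [eq_div_iff (qPochInf_ne_zero hq (mul_pow_ne_one hq.le hw)), hlim]

end QBinomial

section Psi11

variable {a q w : ℂ}

lemma psi11_self_eq_tsum (hq0 : q ≠ 0) :
    psi11 a q q w = ∑' n : ℕ, qPochInt a q n / qPochInt q q n * w ^ n := by
  rw [psi11, ← (Nat.cast_injective (R := ℤ)).tsum_eq]
  · simp only [zpow_natCast]
  · intro m hm
    refine ⟨m.toNat, Int.toNat_of_nonneg (not_lt.mp fun hneg => hm ?_)⟩
    simp only [qPochInt_self_of_neg hq0 hneg, div_zero, zero_mul]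

lemma psi11_mul_zpow (hq0 : q ≠ 0) (ha : qPochInf a q ≠ 0) (hqq : qPochInf q q ≠ 0) (hw : w ≠ 0)
    (n : ℤ) :
    psi11 (a * q ^ n) (q * q ^ n) q w
      = psi11 a q q w * (qPochInt q q n / (qPochInt a q n * w ^ n)) := by
  rw [psi11, psi11, ← tsum_mul_right]
  conv_rhs => rw [← (Equiv.addLeft n).tsum_eq]
  refine tsum_congr fun m => ?_
  have hwn : w ^ n ≠ 0 := zpow_ne_zero n hw
  rw [Equiv.coe_addLeft, qPochInt_mul_zpow hq0 ha, qPochInt_mul_zpow hq0 hqq, zpow_add₀ hw]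
  field_simp

lemma psi11_self_eq (hq0 : q ≠ 0) (hq : ‖q‖ < 1) (hw : ‖w‖ < 1) (ha : qPochInf a q ≠ 0) :
    psi11 a q q w = qPochInf (a * w) q / qPochInf w q := by
  have hqq : qPochInf q q ≠ 0 := qPochInf_ne_zero hq (mul_pow_ne_one hq.le hq)
  rw [psi11_self_eq_tsum hq0, ← phi10_eq_qPochInf_div hq hw, phi10]
  simp only [qPochInt_natCast hq ha, qPochInt_natCast hq hqq]

end Psi11

theorem double_sum_evaluation_Nf1 (q b : ℂ)
    (hq0 : 0 < ‖q‖) (hq1 : ‖q‖ < 1)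
    (hb : ‖b‖ < 1) (hqb : ‖q‖ < ‖b‖ ^ 2) :
    (∑' n : ℕ, b ^ (2 * n) *
      (qPochInt (q / b ^ 2) q n ^ 2 * qPochInf (b ^ 2) q) /
      (qPochInt q q n ^ 2 * qPochInf (q / b ^ 2) q) *
      psi11 (q ^ (1 + (n : ℤ)) / b ^ 2) (q ^ (1 + (n : ℤ))) q b)
    = (qPochInf (b ^ 2) q / qPochInf (q / b ^ 2) q) *
      (qPochInf (q / b) q / qPochInf b q) ^ 2 := by
  have hq0' : q ≠ 0 := norm_pos_iff.mp hq0
  have hb0 : b ≠ 0 := by rintro rfl; simp at hqb; linarith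
  set a := q / b ^ 2
  have ha : ‖a‖ < 1 := by rw [norm_div, norm_pow, div_lt_one (by positivity)]; exact hqb
  have hPa : qPochInf a q ≠ 0 := qPochInf_ne_zero hq1 (mul_pow_ne_one hq1.le ha)
  have hPq : qPochInf q q ≠ 0 := qPochInf_ne_zero hq1 (mul_pow_ne_one hq1.le hq1)
  set Φ := qPochInf (q / b) q / qPochInf b q
  have hΦ : psi11 a q q b = Φ := by
    rw [psi11_self_eq hq0' hq1 hb hPa, show a * b = q / b by simp only [a]; field_simp]
  have hψ (n : ℕ) : psi11 (q ^ (1 + (n : ℤ)) / b ^ 2) (q ^ (1 + (n : ℤ))) q b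
      = Φ * (qPochInt q q n / (qPochInt a q n * b ^ n)) := by
    rw [zpow_add₀ hq0', zpow_one, mul_div_right_comm, psi11_mul_zpow hq0' hPa hPq hb0, hΦ,
      zpow_natCast]
  calc _ = ∑' n : ℕ, qPochInf (b ^ 2) q / qPochInf a q * Φ
        * (qPochInt a q n / qPochInt q q n * b ^ n) := by
        refine tsum_congr fun n => ?_
        have := qPochInt_natCast_ne_zero hq1 hPa n
        have := qPochInt_natCast_ne_zero hq1 hPq n
        rw [hψ, pow_mul]
        field_simp
        ring
    _ = _ := by rw [tsum_mul_left, ← psi11_self_eq_tsum hq0', hΦ]; ring
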